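/- The distribution D assigns equal probability to any two strings with the same image size: for all Z, Z' ∈ [M]^N with |Im(Z)| = |Im(Z')|, Pr_D[{Z}] = Pr_D[{Z'}]. Consequently, for every s < M with Pr_D[|Im| = s] > 0, the conditional distribution of D given |Im(Z)| = s coincides with the conditional distribution of the uniform distribution U given |Im(X)| = s (both being uniform on {W ∈ [M]^N : |Im(W)| = s}). -/

import Mathlib

namespace GLN

noncomputable section

open Finset

/-- `M = 2^m`. -/
def MM (m : ℕ) : ℕ := 2 ^ m

/-- `N = ⌈M · m · ln 2⌉`. -/
def NN (m : ℕ) : ℕ := ⌈(MM m : ℝ) * m * Real.log 2⌉₊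

/-- Strings `X ∈ [M]^N`. -/
abbrev Str (m : ℕ) := Fin (NN m) → Fin (MM m)

/-- The uniform probability mass function on `[M]^N`. -/
def umass (m : ℕ) (_X : Str m) : ℝ := 1 / (MM m : ℝ) ^ NN m

/-- The image `Im(X) ⊆ [M]` of a string, as a finset. -/
def img {m : ℕ} (X : Str m) : Finset (Fin (MM m)) := Finset.image X Finset.univ

/-- Transition kernel of `D_y(X)`: each coordinate with `x_i = y` is replaced by a uniform
independent sample from `[M] \ {y}`; other coordinates are unchanged. -/
def kerDy (m : ℕ) (y : Fin (MM m)) (X Z : Str m) : ℝ :=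
  ∏ i, if X i = y then (if Z i = y then 0 else 1 / ((MM m : ℝ) - 1))
       else (if Z i = X i then 1 else 0)

/-- Transition kernel of `D(X)`: choose `y` uniformly in `[M]`, then apply `D_y`. -/
def kerD (m : ℕ) (X Z : Str m) : ℝ := (1 / (MM m : ℝ)) * ∑ y, kerDy m y X Z

/-- The probability mass function of the distribution `D = D(U)`. -/
def dmass (m : ℕ) (Z : Str m) : ℝ := ∑ X, umass m X * kerD m X Z

/-- Transition kernel of `D_y^inv(Z)`: each coordinate is independently replaced by `y`
with probability `1/M` and left unchanged otherwise. -/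
def kerDinvy (m : ℕ) (y : Fin (MM m)) (Z W : Str m) : ℝ :=
  ∏ i, ((1 / (MM m : ℝ)) * (if W i = y then 1 else 0)
        + (1 - 1 / (MM m : ℝ)) * (if W i = Z i then 1 else 0))

/-- Transition kernel of `D^inv(Z)`: choose `y` uniformly in `[M] \ Im(Z)`,
then apply `D_y^inv`. -/
def kerDinv (m : ℕ) (Z W : Str m) : ℝ :=
  (1 / (((img Z)ᶜ.card : ℝ))) * ∑ y ∈ (img Z)ᶜ, kerDinvy m y Z W

/-- Probability of an event under a mass function. -/
def pr {m : ℕ} (μ : Str m → ℝ) (E : Set (Str m)) : ℝ := ∑ X, E.indicator μ X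

/-- Expectation of a real function under a mass function. -/
def ev {m : ℕ} (μ : Str m → ℝ) (g : Str m → ℝ) : ℝ := ∑ X, μ X * g X

/-- The surjectivity function `f_Surj`. -/
def fSurjB (m : ℕ) (X : Str m) : Bool := decide (img X = Finset.univ)

/-- The `q.2`-th bit of the binary encoding of coordinate `x_{q.1}` of `X`;
this realizes `X` as a string of `n = N·m` bits. -/
def bit {m : ℕ} (X : Str m) (q : Fin (NN m) × Fin m) : Bool :=
  Nat.testBit (X q.1).val q.2.val

/-! Summed over the source string, the kernel of `D_y` factorizes over the coordinates: a
coordinate `z` contributes `0` if `z = y` (no source symbol can produce `y`) and `1 + 1/(M-1)`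
otherwise (`z` is either kept, or produced from `y`). Hence
`Pr_D[Z] = M^{-N-1} · (M - |Im Z|) · (1 + 1/(M-1))^N` depends on `Z` only through `|Im Z|`,
and a mass function that is constant on the event `|Im| = s` conditions to the uniform
distribution on it. -/

section Replacement

variable {ι α : Type*} [Fintype ι] [DecidableEq ι] [Fintype α] [DecidableEq α]

theorem sum_ite_replace (c : ℝ) (y z : α) :
    ∑ x, (if x = y then (if z = y then 0 else c) else (if z = x then 1 else 0)) =
      if z = y then 0 else c + 1 := by
  rw [Fintype.sum_eq_add_sum_compl y, if_pos rfl]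
  have hrest : ∑ x ∈ {y}ᶜ, (if x = y then (if z = y then 0 else c) else (if z = x then 1 else 0))
      = ∑ x ∈ {y}ᶜ, if z = x then (1 : ℝ) else 0 :=
    sum_congr rfl fun x hx => if_neg (by simpa using hx)
  rw [hrest, sum_ite_eq]
  by_cases hz : z = y <;> simp [hz]

theorem sum_prod_ite_replace (c : ℝ) (y : α) (Z : ι → α) :
    ∑ X : ι → α, ∏ i, (if X i = y then (if Z i = y then 0 else c) else (if Z i = X i then 1 else 0))
      = if y ∈ univ.image Z then 0 else (c + 1) ^ Fintype.card ι := by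
  rw [← Fintype.prod_sum (fun i x => if x = y then (if Z i = y then (0 : ℝ) else c)
      else (if Z i = x then 1 else 0))]
  simp_rw [sum_ite_replace]
  split_ifs with hy
  · obtain ⟨i, -, hi⟩ := mem_image.mp hy
    exact prod_eq_zero (mem_univ i) (if_pos hi)
  · rw [← card_univ, ← prod_const]
    exact prod_congr rfl fun i _ => if_neg fun hi => hy (mem_image.mpr ⟨i, mem_univ i, hi⟩)

end Replacement

theorem div_sum_eq_one_div_card {β : Type*} {F : Finset β} {f : β → ℝ} {W : β}
    (hconst : ∀ X ∈ F, f X = f W) (hsum : ∑ X ∈ F, f X ≠ 0) :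
    f W / ∑ X ∈ F, f X = 1 / #F := by
  rw [sum_congr rfl hconst, sum_const, nsmul_eq_mul] at hsum ⊢
  have hW0 : f W ≠ 0 := right_ne_zero_of_mul hsum
  have hF0 : (#F : ℝ) ≠ 0 := left_ne_zero_of_mul hsum
  field_simp

theorem pr_setOf_eq_sum_filter {m : ℕ} (μ : Str m → ℝ) (p : Str m → Prop) [DecidablePred p] :
    pr μ {X | p X} = ∑ X ∈ univ.filter p, μ X := by
  rw [pr, sum_filter]
  exact sum_congr rfl fun X _ => Set.indicator_apply _ _ _

theorem sum_kerDy (m : ℕ) (y : Fin (MM m)) (Z : Str m) :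
    ∑ X, kerDy m y X Z = if y ∈ img Z then 0 else (1 / ((MM m : ℝ) - 1) + 1) ^ NN m := by
  have h := sum_prod_ite_replace (1 / ((MM m : ℝ) - 1)) y Z
  rwa [Fintype.card_fin] at h

theorem dmass_eq (m : ℕ) (Z : Str m) :
    dmass m Z = 1 / (MM m : ℝ) ^ NN m * (1 / (MM m : ℝ)) * #(img Z)ᶜ
      * (1 / ((MM m : ℝ) - 1) + 1) ^ NN m := by
  simp only [dmass, kerD, umass, ← mul_sum, ← mul_assoc]
  rw [sum_comm, sum_congr rfl fun y _ => sum_kerDy m y Z, sum_ite,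
    sum_const_zero, zero_add, sum_const, nsmul_eq_mul, filter_not, filter_mem_eq_inter,
    univ_inter, ← compl_eq_univ_sdiff]
  ring

theorem dmass_eq_of_card_img_eq {m : ℕ} {Z Z' : Str m} (h : #(img Z) = #(img Z')) :
    dmass m Z = dmass m Z' := by
  rw [dmass_eq, dmass_eq, card_compl, card_compl, h]

theorem stmt10_general (m : ℕ) :
    (∀ Z Z' : Str m, (img Z).card = (img Z').card → dmass m Z = dmass m Z') ∧
    (∀ s : ℕ, s < MM m → 0 < pr (dmass m) {X : Str m | (img X).card = s} →
      ∀ W : Str m, (img W).card = s →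
        dmass m W / pr (dmass m) {X : Str m | (img X).card = s} =
          umass m W / pr (umass m) {X : Str m | (img X).card = s} ∧
        dmass m W / pr (dmass m) {X : Str m | (img X).card = s} =
          1 / ((Finset.univ.filter fun X : Str m => (img X).card = s).card : ℝ)) := by
  refine ⟨fun Z Z' => dmass_eq_of_card_img_eq, fun s _ hpos W hW => ?_⟩
  have hWF : W ∈ univ.filter fun X : Str m => #(img X) = s := mem_filter.mpr ⟨mem_univ W, hW⟩
  simp only [pr_setOf_eq_sum_filter] at hpos ⊢
  have hD := div_sum_eq_one_div_card
    (fun X hX => dmass_eq_of_card_img_eq ((mem_filter.mp hX).2.trans hW.symm)) hpos.ne'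
  have hU : umass m W / _ = _ := div_sum_eq_one_div_card (fun _ _ => rfl)
    (sum_pos (fun _ _ => by unfold umass MM; positivity) ⟨W, hWF⟩).ne'
  exact ⟨hD.trans hU.symm, hD⟩

/-- `D` assigns equal probability to any two strings with the same image size;
consequently, for every `s < M` with `Pr_D[|Im| = s] > 0`, conditioned on `|Im| = s` the
distributions `D` and `U` coincide, both being uniform on `{W : |Im(W)| = s}`. -/
theorem stmt10 (m : ℕ) (hm : 1 ≤ m) :
    (∀ Z Z' : Str m, (img Z).card = (img Z').card → dmass m Z = dmass m Z') ∧
    (∀ s : ℕ, s < MM m → 0 < pr (dmass m) {X : Str m | (img X).card = s} →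
      ∀ W : Str m, (img W).card = s →
        dmass m W / pr (dmass m) {X : Str m | (img X).card = s} =
          umass m W / pr (umass m) {X : Str m | (img X).card = s} ∧
        dmass m W / pr (dmass m) {X : Str m | (img X).card = s} =
          1 / ((Finset.univ.filter fun X : Str m => (img X).card = s).card : ℝ)) :=
  stmt10_general m

end
end GLN
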